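/- For a simple graph G with edge vw, the two orderings of edge local complementation agree: LC at v then w then v yields the same graph as LC at w then v then w. -/

import Mathlib

/-!
Both sides are the pivot of `G` along `vw`. Writing `N[x]` for the closed neighbourhood of `x`,
the pivot joins distinct `a, b` exactly when `G.Adj a b` is toggled by the parity of
`[a ∈ N[v]][b ∈ N[w]] + [a ∈ N[w]][b ∈ N[v]]`, an expression symmetric in `v` and `w`.
Closed neighbourhoods make the same formula correct on the rows of `v` and `w`, where the pivot
exchanges the neighbourhoods of the two ends of the edge.
-/

/-- Local complementation of a simple graph `G` at vertex `v`: complement all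
edges among the neighbours of `v`, leaving all other adjacencies unchanged. -/
def localComp {V : Type*} (G : SimpleGraph V) (v : V) : SimpleGraph V where
  Adj a b := a ≠ b ∧ (G.Adj a b ↔ ¬(G.Adj v a ∧ G.Adj v b))
  symm := by
    refine ⟨?_⟩
    intro a b ⟨hne, h⟩
    exact ⟨hne.symm, by rw [G.adj_comm b a, and_comm]; exact h⟩
  loopless := ⟨fun a h => h.1 rfl⟩

section

variable {V : Type*} (G : SimpleGraph V) {u v w a b : V}

theorem localComp_adj :
    (localComp G u).Adj a b ↔ a ≠ b ∧ Xor (G.Adj a b) (G.Adj u a ∧ G.Adj u b) :=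
  and_congr_right' xor_iff_iff_not.symm

theorem localComp_adj_self : (localComp G u).Adj u a ↔ G.Adj u a := by
  rw [localComp_adj]
  grind [G.loopless.irrefl u, SimpleGraph.Adj.ne]

variable {G}

theorem localComp_adj_of_adj (h : G.Adj u w) :
    (localComp G u).Adj w a ↔ w ≠ a ∧ Xor (G.Adj w a) (G.Adj u a) := by
  simp [localComp_adj, h]

theorem localComp_localComp_localComp_adj (h : G.Adj v w) :
    (localComp (localComp (localComp G v) w) v).Adj a b ↔
      a ≠ b ∧ Xor (G.Adj a b) (Xor ((a = v ∨ G.Adj v a) ∧ (b = w ∨ G.Adj w b))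
        ((a = w ∨ G.Adj w a) ∧ (b = v ∨ G.Adj v b))) := by
  have h' : (localComp G v).Adj w v := ((localComp_adj_self G).2 h).symm
  rw [localComp_adj (localComp (localComp G v) w), localComp_adj_of_adj h',
    localComp_adj_of_adj h', localComp_adj (localComp G v) (u := w), localComp_adj_self,
    localComp_adj_self, localComp_adj_of_adj h, localComp_adj_of_adj h, localComp_adj G]
  have hv := G.loopless.irrefl v
  have hw := G.loopless.irrefl w
  by_cases hav : a = v <;> by_cases haw : a = w <;> by_cases hbv : b = v <;>
    by_cases hbw : b = w <;> subst_vars <;> grind [G.adj_comm, SimpleGraph.Adj.ne]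

end

/-- the two orderings of edge local complementation agree:
for an edge `vw`, LC at `v` then `w` then `v` equals LC at `w` then `v` then `w`. -/
theorem edgeLocalComp_comm {V : Type*} (G : SimpleGraph V) (v w : V)
    (h : G.Adj v w) :
    localComp (localComp (localComp G v) w) v =
      localComp (localComp (localComp G w) v) w := by
  ext a b
  rw [localComp_localComp_localComp_adj h, localComp_localComp_localComp_adj h.symm,
    xor_comm ((a = w ∨ _) ∧ _)]
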